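/- The element ξ := t·x·α·t satisfies t·x·α·t = t·β·x·t, and ξ is a Maurer–Cartan element: (D + t·x·α·t)·(D + t·x·α·t) = 0 (equivalently, D·ξ + ξ·D + ξ·ξ = 0). -/

import Mathlib

/-!
Write `a := x (1 + s x)⁻¹`, so that `ξ = t a t`. Differentiating `(1 + s x) α = 1` and using
`[D, s] = 1 - t` together with the Maurer–Cartan equation `D x + x D + x² = 0` gives
`D a + a D + a t a = 0`. Sandwiching this between two copies of the idempotent `t`, which
commutes with `D`, is exactly `(D + t a t)² = 0`. The identity `t x α t = t β x t` is the
push-through identity `x (1 + s x)⁻¹ = (1 + x s)⁻¹ x`.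
-/

open Ring

section

variable {R : Type*} [Ring R]

theorem isUnit_one_add_mul_swap {a b : R} (h : IsUnit (1 + a * b)) : IsUnit (1 + b * a) := by
  have hr : (1 + a * b) * inverse (1 + a * b) = 1 := mul_inverse_cancel _ h
  have hl : inverse (1 + a * b) * (1 + a * b) = 1 := inverse_mul_cancel _ h
  refine ⟨⟨1 + b * a, 1 - b * inverse (1 + a * b) * a, ?_, ?_⟩, rfl⟩
  · linear_combination (norm := noncomm_ring) -(b * hr * a)
  · linear_combination (norm := noncomm_ring) -(b * hl * a)

theorem mul_inverse_one_add_mul {a b : R} (h : IsUnit (1 + a * b)) :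
    b * inverse (1 + a * b) = inverse (1 + b * a) * b := by
  have hr : (1 + a * b) * inverse (1 + a * b) = 1 := mul_inverse_cancel _ h
  have hl : inverse (1 + b * a) * (1 + b * a) = 1 :=
    inverse_mul_cancel _ (isUnit_one_add_mul_swap h)
  linear_combination (norm := noncomm_ring)
    inverse (1 + b * a) * b * hr - hl * (b * inverse (1 + a * b))

theorem commutator_inverse {u : R} (D : R) (h : IsUnit u) :
    D * inverse u - inverse u * D = -(inverse u * (D * u - u * D) * inverse u) := by
  have hr : u * inverse u = 1 := mul_inverse_cancel _ h
  have hl : inverse u * u = 1 := inverse_mul_cancel _ h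
  linear_combination (norm := noncomm_ring) inverse u * D * hr - hl * (D * inverse u)

theorem mc_mul_inverse_one_add_mul {s t x D : R} (hu : IsUnit (1 + s * x))
    (hDD : D * D = 0) (hDs : D * s + s * D = 1 - t) (hMC : (D + x) * (D + x) = 0) :
    D * (x * inverse (1 + s * x)) + x * inverse (1 + s * x) * D
      + x * inverse (1 + s * x) * t * (x * inverse (1 + s * x)) = 0 := by
  set α := inverse (1 + s * x)
  have hl : α * (1 + s * x) = 1 := inverse_mul_cancel _ hu
  have hx : D * x + x * D + x * x = 0 := by
    linear_combination (norm := noncomm_ring) hMC - hDD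
  have hsx : D * (1 + s * x) - (1 + s * x) * D = (1 - t) * x + s * (x * x) := by
    linear_combination (norm := noncomm_ring) hDs * x - s * hx
  have hα : D * α - α * D = -(α * ((1 - t) * x + s * (x * x)) * α) := by
    rw [commutator_inverse D hu, hsx]
  linear_combination (norm := noncomm_ring) hx * α - x * hα + x * hl * (x * α)

theorem add_sandwich_mul_self_eq_zero {t D a : R} (htt : t * t = t) (hDt : D * t = t * D)
    (hDD : D * D = 0) (ha : D * a + a * D + a * t * a = 0) :
    (D + t * a * t) * (D + t * a * t) = 0 := by
  linear_combination (norm := noncomm_ring)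
    hDD + hDt * (a * t) - t * a * hDt + t * a * htt * (a * t) + t * ha * t

end

theorem xi_is_MC_general {R : Type*} [Ring R] (s t x D : R)
    (htt : t * t = t)
    (hu : IsUnit (1 + s * x))
    (hDD : D * D = 0) (hDs : D * s + s * D = 1 - t) (hDt : D * t = t * D)
    (hMC : (D + x) * (D + x) = 0) :
    let α := Ring.inverse (1 + s * x)
    let β := Ring.inverse (1 + x * s)
    t * x * α * t = t * β * x * t ∧
      (D + t * x * α * t) * (D + t * x * α * t) = 0 := by
  intro α β
  refine ⟨?_, ?_⟩
  · simp only [α, β, mul_assoc t, mul_inverse_one_add_mul hu]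
  · simpa only [mul_assoc t x α] using
      add_sandwich_mul_self_eq_zero htt hDt hDD (mc_mul_inverse_one_add_mul hu hDD hDs hMC)

/-- `ξ := t x α t` satisfies `t x α t = t β x t` and is a Maurer–Cartan element:
`(D + ξ)² = 0`. -/
theorem xi_is_MC {R : Type*} [Ring R] (s t x D : R)
    (hss : s * s = 0) (hst : s * t = 0) (hts : t * s = 0) (htt : t * t = t)
    (hu : IsUnit (1 + s * x))
    (hDD : D * D = 0) (hDs : D * s + s * D = 1 - t) (hDt : D * t = t * D)
    (hMC : (D + x) * (D + x) = 0) :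
    let α := Ring.inverse (1 + s * x)
    let β := Ring.inverse (1 + x * s)
    t * x * α * t = t * β * x * t ∧
      (D + t * x * α * t) * (D + t * x * α * t) = 0 :=
  xi_is_MC_general s t x D htt hu hDD hDs hDt hMC
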